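/- Grönwall argument for the blow-up criterion: let $y : [T/2, T) \to [0,\infty)$ be absolutely continuous satisfying $y'(t) \leq C f(t) y(t)$, where $f = f_{\leq} + f_{>}$ with $f_{\leq}(t) \leq M$ for all $t$ and $\int_{T/2}^{t} f_{>}(\tau)\,d\tau \leq \frac{\epsilon \ln 2}{C} \bar{Q}(t)$ for some $\epsilon > 0$, where $\bar{Q}(t)$ satisfies $2^{\epsilon \bar{Q}(t)} \leq A \sup_{\tau \in [T/2,t]} y(\tau)^{1/2}$ for a constant $A \geq 1$. Then $y$ is bounded on $[T/2,T)$; in fact $y(t) \leq A^2 e^{2TCM} y(T/2)^2$ for all $t \in [T/2, T)$ (assuming $y(T/2) \geq 1$ without loss of generality). -/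

import Mathlib

/-!
Grönwall's inequality for the coefficient `C (M + f_>)` bounds `y(τ)` by
`y(T/2) e^{TCM} 2^{ε Q̄(τ)} ≤ K √(sup_{[T/2,τ]} y)` with `K = A e^{TCM} y(T/2)`.
The right-hand side is monotone in `τ`, so the running supremum `S` of `y` satisfies
`S ≤ K √S`, whence `S ≤ K²`.
-/

open MeasureTheory Set

open Real

theorem le_sq_of_le_mul_sqrt {x K : ℝ} (h : x ≤ K * √x) : x ≤ K ^ 2 := by
  rcases le_or_gt x 0 with hx | hx
  · exact hx.trans (sq_nonneg K)
  have hsqrt : 0 < √x := sqrt_pos.mpr hx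
  have hK : √x ≤ K := le_of_mul_le_mul_right (by rwa [mul_self_sqrt hx.le]) hsqrt
  calc x = √x ^ 2 := (sq_sqrt hx.le).symm
    _ ≤ K ^ 2 := pow_le_pow_left₀ hsqrt.le hK 2

theorem le_sq_of_le_mul_sqrt_sSup {y : ℝ → ℝ} {a t K : ℝ} (hat : a ≤ t)
    (hy : ContinuousOn y (Icc a t)) (hK : 0 ≤ K)
    (h : ∀ τ ∈ Icc a t, y τ ≤ K * √(sSup (y '' Icc a τ))) : y t ≤ K ^ 2 := by
  have hbdd : BddAbove (y '' Icc a t) := isCompact_Icc.bddAbove_image hy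
  have hsup : sSup (y '' Icc a t) ≤ K * √(sSup (y '' Icc a t)) := by
    refine csSup_le (nonempty_Icc.mpr hat |>.image y) ?_
    rintro _ ⟨τ, hτ, rfl⟩
    refine (h τ hτ).trans (mul_le_mul_of_nonneg_left (sqrt_le_sqrt ?_) hK)
    exact csSup_le_csSup hbdd (nonempty_Icc.mpr hτ.1 |>.image y)
      (image_mono (Icc_subset_Icc_right hτ.2))
  exact (le_csSup hbdd (mem_image_of_mem y ⟨hat, le_rfl⟩)).trans (le_sq_of_le_mul_sqrt hsup)

section Gronwall

variable {y y' φ : ℝ → ℝ} {a b : ℝ}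

theorem le_mul_exp_integral_of_deriv_le_mul_of_pos (hab : a ≤ b)
    (hy : ContinuousOn y (Icc a b)) (hy' : ∀ t ∈ Ioo a b, HasDerivAt y (y' t) t)
    (hφ : IntegrableOn φ (Icc a b))
    (hpos : ∀ t ∈ Icc a b, 0 < y t) (hle : ∀ t ∈ Ioo a b, y' t ≤ φ t * y t) :
    y b ≤ y a * exp (∫ t in a..b, φ t) := by
  have hlog : log (y b) - log (y a) ≤ ∫ t in a..b, φ t := by
    refine intervalIntegral.sub_le_integral_of_hasDeriv_right_of_le
      (g' := fun t ↦ y' t / y t) hab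
      (hy.log fun t ht ↦ (hpos t ht).ne') (fun t ht ↦ ?_) hφ fun t ht ↦ ?_
    · exact ((hy' t ht).log (hpos t (Ioo_subset_Icc_self ht)).ne').hasDerivWithinAt
    · exact (div_le_iff₀ (hpos t (Ioo_subset_Icc_self ht))).mpr (hle t ht)
  have ha := hpos a (left_mem_Icc.mpr hab)
  have hb := hpos b (right_mem_Icc.mpr hab)
  calc y b = y a * exp (log (y b) - log (y a)) := by
        rw [exp_sub, exp_log ha, exp_log hb]; field_simp
    _ ≤ y a * exp (∫ t in a..b, φ t) := by gcongr

theorem le_mul_exp_integral_of_deriv_le_mul (hab : a ≤ b) (hy : ContinuousOn y (Icc a b))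
    (hy' : ∀ t ∈ Ioo a b, HasDerivAt y (y' t) t) (hφ : IntegrableOn φ (Icc a b))
    (hy0 : ∀ t ∈ Icc a b, 0 ≤ y t) (hφ0 : ∀ t ∈ Ioo a b, 0 ≤ φ t)
    (hle : ∀ t ∈ Ioo a b, y' t ≤ φ t * y t) :
    y b ≤ y a * exp (∫ t in a..b, φ t) := by
  set E := exp (∫ t in a..b, φ t)
  have hE : 0 < E := exp_pos _
  -- Apply the positive case to `y + δ` and let `δ → 0`.
  have hδ : ∀ δ > 0, y b + δ ≤ (y a + δ) * E := fun δ hδ ↦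
    le_mul_exp_integral_of_deriv_le_mul_of_pos (y := fun t ↦ y t + δ) hab
      (hy.add continuousOn_const) (fun t ht ↦ (hy' t ht).add_const δ) hφ
      (fun t ht ↦ by linarith [hy0 t ht])
      (fun t ht ↦ (hle t ht).trans (by nlinarith [hφ0 t ht]))
  refine le_of_forall_pos_le_add fun ε hε ↦ ?_
  have := hδ (ε / E) (div_pos hε hE)
  rw [add_mul, div_mul_cancel₀ ε hE.ne'] at this
  linarith [div_pos hε hE]

theorem le_mul_exp_of_deriv_le_const_add_mul {c : ℝ} (hab : a ≤ b)
    (hy : ContinuousOn y (Icc a b)) (hy' : ∀ t ∈ Ioo a b, HasDerivAt y (y' t) t)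
    (hφ : IntegrableOn φ (Icc a b)) (hc : 0 ≤ c) (hy0 : ∀ t ∈ Icc a b, 0 ≤ y t)
    (hφ0 : ∀ t ∈ Ioo a b, 0 ≤ φ t)
    (hle : ∀ t ∈ Ioo a b, y' t ≤ (c + φ t) * y t) :
    y b ≤ y a * exp (c * (b - a) + ∫ t in a..b, φ t) := by
  have hint : ∫ t in a..b, (c + φ t) = c * (b - a) + ∫ t in a..b, φ t := by
    rw [intervalIntegral.integral_add intervalIntegrable_const
      ((intervalIntegrable_iff_integrableOn_Icc_of_le hab).mpr hφ)]
    simp [mul_comm]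
  rw [← hint]
  exact le_mul_exp_integral_of_deriv_le_mul hab hy hy'
    ((integrableOn_const (C := c) measure_Icc_lt_top.ne).add hφ) hy0
    (fun t ht ↦ add_nonneg hc (hφ0 t ht)) hle

theorem le_mul_exp_mul_two_rpow_of_deriv_le {f g : ℝ → ℝ} {C M ε Q : ℝ}
    (hab : a ≤ b) (hy : ContinuousOn y (Icc a b)) (hy' : ∀ t ∈ Ioo a b, HasDerivAt y (y' t) t)
    (hg : IntegrableOn g (Icc a b)) (hC : 0 < C) (hM : 0 ≤ M) (hy0 : ∀ t ∈ Icc a b, 0 ≤ y t)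
    (hg0 : ∀ t ∈ Ioo a b, 0 ≤ g t) (hf : ∀ t ∈ Ioo a b, f t ≤ M)
    (hle : ∀ t ∈ Ioo a b, y' t ≤ C * (f t + g t) * y t)
    (hgQ : ∫ t in a..b, g t ≤ ε * log 2 / C * Q) :
    y b ≤ y a * exp (C * M * (b - a)) * 2 ^ (ε * Q) := by
  have hgron := le_mul_exp_of_deriv_le_const_add_mul (φ := fun t ↦ C * g t) hab hy hy'
    (hg.const_mul C) (mul_nonneg hC.le hM) hy0 (fun t ht ↦ mul_nonneg hC.le (hg0 t ht))
    fun t ht ↦ by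
      have := mul_nonneg (mul_nonneg (sub_nonneg.2 (hf t ht)) hC.le)
        (hy0 t (Ioo_subset_Icc_self ht))
      linarith [hle t ht]
  have hhigh : ∫ t in a..b, C * g t ≤ log 2 * (ε * Q) := by
    rw [intervalIntegral.integral_const_mul]
    calc C * ∫ t in a..b, g t ≤ C * (ε * log 2 / C * Q) := mul_le_mul_of_nonneg_left hgQ hC.le
      _ = log 2 * (ε * Q) := by field_simp
  have := hy0 a (left_mem_Icc.mpr hab)
  calc y b ≤ y a * exp (C * M * (b - a) + ∫ t in a..b, C * g t) := hgron
    _ ≤ y a * exp (C * M * (b - a) + log 2 * (ε * Q)) := by gcongr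
    _ = y a * exp (C * M * (b - a)) * 2 ^ (ε * Q) := by
      rw [exp_add, rpow_def_of_pos two_pos]; ring

end Gronwall

theorem stmt7_general (T C ε M A : ℝ) (hC : 0 < C) (hM : 0 ≤ M)
    (hA : 1 ≤ A) (y d fle fgt : ℝ → ℝ) (Qbar : ℝ → ℝ)
    (hy_nonneg : ∀ t ∈ Ico (T / 2) T, 0 ≤ y t)
    (hy_deriv : ∀ t ∈ Ico (T / 2) T, HasDerivAt y (d t) t)
    (hd : ∀ t ∈ Ico (T / 2) T, d t ≤ C * (fle t + fgt t) * y t)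
    (hfgt_nonneg : ∀ t ∈ Ico (T / 2) T, 0 ≤ fgt t)
    (hfle : ∀ t ∈ Ico (T / 2) T, fle t ≤ M)
    (hfgt_int : IntegrableOn fgt (Ico (T / 2) T))
    (hfgt : ∀ t ∈ Ico (T / 2) T, ∫ τ in (T / 2)..t, fgt τ ≤ ε * Real.log 2 / C * Qbar t)
    (hQbar : ∀ t ∈ Ico (T / 2) T,
      (2 : ℝ) ^ (ε * Qbar t) ≤ A * Real.sqrt (sSup (y '' Icc (T / 2) t))) :
    ∀ t ∈ Ico (T / 2) T, y t ≤ A ^ 2 * Real.exp (2 * T * C * M) * (y (T / 2)) ^ 2 := by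
  intro t ht
  have hsub : ∀ τ ∈ Icc (T / 2) t, Icc (T / 2) τ ⊆ Ico (T / 2) T := fun τ hτ s hs ↦
    ⟨hs.1, hs.2.trans_lt (hτ.2.trans_lt ht.2)⟩
  have hcont : ContinuousOn y (Icc (T / 2) t) := fun τ hτ ↦
    (hy_deriv τ (hsub t ⟨ht.1, le_rfl⟩ hτ)).continuousAt.continuousWithinAt
  have hy₀ : 0 ≤ y (T / 2) := hy_nonneg _ ⟨le_rfl, by linarith [ht.1, ht.2]⟩
  set K := A * exp (T * C * M) * y (T / 2)
  have hgrowth : ∀ τ ∈ Icc (T / 2) t, y τ ≤ K * √(sSup (y '' Icc (T / 2) τ)) := by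
    intro τ hτ
    have hτ' := hsub τ hτ ⟨hτ.1, le_rfl⟩
    have hIoo : ∀ s ∈ Ioo (T / 2) τ, s ∈ Ico (T / 2) T := fun s hs ↦
      hsub τ hτ (Ioo_subset_Icc_self hs)
    calc y τ ≤ y (T / 2) * exp (C * M * (τ - T / 2)) * 2 ^ (ε * Qbar τ) :=
          le_mul_exp_mul_two_rpow_of_deriv_le hτ.1 (hcont.mono (Icc_subset_Icc_right hτ.2))
            (fun s hs ↦ hy_deriv s (hIoo s hs)) (hfgt_int.mono_set (hsub τ hτ)) hC hM
            (fun s hs ↦ hy_nonneg s (hsub τ hτ hs)) (fun s hs ↦ hfgt_nonneg s (hIoo s hs))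
            (fun s hs ↦ hfle s (hIoo s hs)) (fun s hs ↦ hd s (hIoo s hs)) (hfgt τ hτ')
      _ ≤ y (T / 2) * exp (T * C * M) * (A * √(sSup (y '' Icc (T / 2) τ))) := by
          have : C * M * (τ - T / 2) ≤ T * C * M := by
            nlinarith [mul_nonneg hC.le hM, hτ'.1, hτ'.2]
          gcongr
          exact hQbar τ hτ'
      _ = K * √(sSup (y '' Icc (T / 2) τ)) := by ring
  calc y t ≤ K ^ 2 := le_sq_of_le_mul_sqrt_sSup ht.1 hcont (by positivity) hgrowth
    _ = A ^ 2 * exp (2 * T * C * M) * y (T / 2) ^ 2 := by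
      rw [show 2 * T * C * M = T * C * M + T * C * M by ring, exp_add]; ring

/-- Grönwall argument for the blow-up criterion: if `y' ≤ C f y` on `[T/2, T)` with
`f = f_≤ + f_>`, `f_≤ ≤ M`, `∫_{T/2}^t f_> ≤ (ε ln 2 / C) Q̄(t)`, and
`2^{ε Q̄(t)} ≤ A sup_{[T/2,t]} y^{1/2}` with `A ≥ 1`, then (assuming `y(T/2) ≥ 1`)
`y(t) ≤ A² e^{2TCM} y(T/2)²` on `[T/2, T)`. -/
theorem stmt7 (T C ε M A : ℝ) (hT : 0 < T) (hC : 0 < C) (hε : 0 < ε) (hM : 0 ≤ M)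
    (hA : 1 ≤ A) (y d fle fgt : ℝ → ℝ) (Qbar : ℝ → ℝ)
    (hy_nonneg : ∀ t ∈ Ico (T / 2) T, 0 ≤ y t)
    (hy_deriv : ∀ t ∈ Ico (T / 2) T, HasDerivAt y (d t) t)
    (hd : ∀ t ∈ Ico (T / 2) T, d t ≤ C * (fle t + fgt t) * y t)
    (hfle_nonneg : ∀ t ∈ Ico (T / 2) T, 0 ≤ fle t)
    (hfgt_nonneg : ∀ t ∈ Ico (T / 2) T, 0 ≤ fgt t)
    (hfle : ∀ t ∈ Ico (T / 2) T, fle t ≤ M)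
    (hfgt_int : IntegrableOn fgt (Ico (T / 2) T))
    (hfgt : ∀ t ∈ Ico (T / 2) T, ∫ τ in (T / 2)..t, fgt τ ≤ ε * Real.log 2 / C * Qbar t)
    (hQbar : ∀ t ∈ Ico (T / 2) T,
      (2 : ℝ) ^ (ε * Qbar t) ≤ A * Real.sqrt (sSup (y '' Icc (T / 2) t)))
    (hy0 : 1 ≤ y (T / 2)) :
    ∀ t ∈ Ico (T / 2) T, y t ≤ A ^ 2 * Real.exp (2 * T * C * M) * (y (T / 2)) ^ 2 :=
  stmt7_general T C ε M A hC hM hA y d fle fgt Qbar hy_nonneg hy_deriv hd hfgt_nonneg hfle hfgt_int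
    hfgt hQbar
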